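/- arXiv:1406.7301 — 10 statements merged into one kernel-verified Lean document; each statement's English description precedes it below -/
import Mathlib

section
/- Suppose all diagonal entries of R are nonnegative (this holds in particular when α ≤ α_opt := min_{i∈S₋}|c_i/T_{ii}| and β ≤ β_opt := min_{i∈S₊}|c_i/T_{ii}|), and let γ > 0 satisfy γ·Q_{ii} ≤ 1 for every i. Then the 2n×2n matrix S = [[I_n − γQ, γR],[I_n, 0]] is stochastic. Moreover, if Q is invertible, then the matrix obtained by censoring the first n states of S, namely 0 + I_n·(I_n − (I_n − γQ))⁻¹·γR, equals Q⁻¹R. -/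
open Matrix

/-- If all diagonal entries of R are nonnegative and γ > 0 satisfies
γ·Q_ii ≤ 1 for all i, then S = [[I − γQ, γR],[I, 0]] is stochastic; moreover, if Q is
invertible, censoring the first n states of S, i.e. 0 + I·(I − (I − γQ))⁻¹·(γR),
equals Q⁻¹R. -/
theorem stmt2 (np nm : ℕ) (hnp : 1 ≤ np) (hnm : 1 ≤ nm)
    (T : Matrix (Fin np ⊕ Fin nm) (Fin np ⊕ Fin nm) ℝ)
    (hTod : ∀ i j, i ≠ j → 0 ≤ T i j)
    (hT1 : T *ᵥ 1 = 0)
    (c : Fin np ⊕ Fin nm → ℝ)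
    (hcp : ∀ i : Fin np, 0 < c (Sum.inl i))
    (hcm : ∀ i : Fin nm, c (Sum.inr i) < 0)
    (α β : ℝ) (hα : 0 ≤ α) (hβ : 0 ≤ β)
    (Q R : Matrix (Fin np ⊕ Fin nm) (Fin np ⊕ Fin nm) ℝ)
    (hQ : Q = fromBlocks
      (diagonal (fun i => c (Sum.inl i)) - α • T.toBlocks₁₁) (-(β • T.toBlocks₁₂))
      (-(α • T.toBlocks₂₁)) (diagonal (fun i => -c (Sum.inr i)) - β • T.toBlocks₂₂))
    (hR : R = fromBlocks
      (diagonal (fun i => c (Sum.inl i)) + β • T.toBlocks₁₁) (α • T.toBlocks₁₂)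
      (β • T.toBlocks₂₁) (diagonal (fun i => -c (Sum.inr i)) + α • T.toBlocks₂₂))
    (hRdiag : ∀ i, 0 ≤ R i i)
    (γ : ℝ) (hγ : 0 < γ) (hγQ : ∀ i, γ * Q i i ≤ 1)
    (S : Matrix ((Fin np ⊕ Fin nm) ⊕ (Fin np ⊕ Fin nm))
                ((Fin np ⊕ Fin nm) ⊕ (Fin np ⊕ Fin nm)) ℝ)
    (hS : S = fromBlocks (1 - γ • Q) (γ • R) 1 0) :
    (∀ i j, 0 ≤ S i j) ∧
    (∀ i, ∑ j, S i j = 1) ∧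
    (IsUnit Q.det →
      (0 : Matrix (Fin np ⊕ Fin nm) (Fin np ⊕ Fin nm) ℝ) +
        1 * (1 - (1 - γ • Q))⁻¹ * (γ • R) = Q⁻¹ * R) := by

  -- Off-diagonal entries of Q are nonpositive
  have hQoff : ∀ a b, a ≠ b → Q a b ≤ 0 := by
    intro a b hab
    subst hQ
    rcases a with a | a <;> rcases b with b | b <;>
      simp only [fromBlocks_apply₁₁, fromBlocks_apply₁₂, fromBlocks_apply₂₁,
        fromBlocks_apply₂₂, Matrix.sub_apply, Matrix.neg_apply, Matrix.smul_apply,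
        smul_eq_mul, Matrix.toBlocks₁₁, Matrix.toBlocks₁₂, Matrix.toBlocks₂₁,
        Matrix.toBlocks₂₂, Matrix.of_apply]
    · have hne : a ≠ b := fun h => hab (by rw [h])
      rw [diagonal_apply_ne _ hne]
      have := mul_nonneg hα (hTod _ _ hab)
      linarith
    · have := mul_nonneg hβ (hTod _ _ hab)
      linarith
    · have := mul_nonneg hα (hTod _ _ hab)
      linarith
    · have hne : a ≠ b := fun h => hab (by rw [h])
      rw [diagonal_apply_ne _ hne]
      have := mul_nonneg hβ (hTod _ _ hab)
      linarith
  -- Entries of R are nonnegative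
  have hRnn : ∀ a b, 0 ≤ R a b := by
    intro a b
    by_cases hab : a = b
    · subst hab; exact hRdiag a
    · subst hR
      rcases a with a | a <;> rcases b with b | b <;>
        simp only [fromBlocks_apply₁₁, fromBlocks_apply₁₂, fromBlocks_apply₂₁,
          fromBlocks_apply₂₂, Matrix.add_apply, Matrix.smul_apply, smul_eq_mul,
          Matrix.toBlocks₁₁, Matrix.toBlocks₁₂, Matrix.toBlocks₂₁, Matrix.toBlocks₂₂, Matrix.of_apply]
      · have hne : a ≠ b := fun h => hab (by rw [h])
        rw [diagonal_apply_ne _ hne]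
        have := mul_nonneg hβ (hTod _ _ hab)
        linarith
      · exact mul_nonneg hα (hTod _ _ hab)
      · exact mul_nonneg hβ (hTod _ _ hab)
      · have hne : a ≠ b := fun h => hab (by rw [h])
        rw [diagonal_apply_ne _ hne]
        have := mul_nonneg hα (hTod _ _ hab)
        linarith
  -- Q - R = -(α+β) • T
  have hQR : Q - R = (-(α + β)) • T := by
    subst hQ; subst hR
    ext a b
    rcases a with a | a <;> rcases b with b | b <;>
      simp only [Matrix.sub_apply, Matrix.smul_apply, smul_eq_mul,
        fromBlocks_apply₁₁, fromBlocks_apply₁₂, fromBlocks_apply₂₁,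
        fromBlocks_apply₂₂, Matrix.add_apply, Matrix.neg_apply,
        Matrix.toBlocks₁₁, Matrix.toBlocks₁₂, Matrix.toBlocks₂₁, Matrix.toBlocks₂₂, Matrix.of_apply] <;>
      ring
  -- Row sums of Q equal row sums of R
  have hsum : ∀ a, ∑ b, Q a b = ∑ b, R a b := by
    intro a
    have h0 : ((Q - R) *ᵥ 1) a = 0 := by
      rw [hQR, smul_mulVec, hT1, smul_zero]
      rfl
    have h1 : ((Q - R) *ᵥ 1) a = ∑ b, Q a b - ∑ b, R a b := by
      simp [Matrix.mulVec, dotProduct, Matrix.sub_apply, Finset.sum_sub_distrib]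
    linarith [h1 ▸ h0]
  refine ⟨?_, ?_, ?_⟩
  · -- nonnegativity
    intro i j
    subst hS
    rcases i with a | a <;> rcases j with b | b <;>
      simp only [fromBlocks_apply₁₁, fromBlocks_apply₁₂, fromBlocks_apply₂₁,
        fromBlocks_apply₂₂, Matrix.sub_apply, Matrix.smul_apply, smul_eq_mul,
        Matrix.zero_apply, le_refl]
    · by_cases hab : a = b
      · subst hab
        rw [Matrix.one_apply_eq]
        linarith [hγQ a]
      · rw [Matrix.one_apply_ne hab]
        have := mul_nonpos_of_nonneg_of_nonpos hγ.le (hQoff a b hab)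
        linarith
    · exact mul_nonneg hγ.le (hRnn a b)
    · by_cases hab : a = b
      · subst hab; rw [Matrix.one_apply_eq]; norm_num
      · rw [Matrix.one_apply_ne hab]
  · -- row sums
    intro i
    subst hS
    have hone : ∀ a : Fin np ⊕ Fin nm, ∑ b, (1 : Matrix (Fin np ⊕ Fin nm) (Fin np ⊕ Fin nm) ℝ) a b = 1 := by
      intro a
      simp [Matrix.one_apply]
    rcases i with a | a
    · rw [Fintype.sum_sum_type]
      simp only [fromBlocks_apply₁₁, fromBlocks_apply₁₂, Matrix.sub_apply,
        Matrix.smul_apply, smul_eq_mul]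
      rw [Finset.sum_sub_distrib, hone a, ← Finset.mul_sum, ← Finset.mul_sum, hsum a]
      ring
    · rw [Fintype.sum_sum_type]
      simp only [fromBlocks_apply₂₁, fromBlocks_apply₂₂, Matrix.zero_apply,
        Finset.sum_const_zero, add_zero]
      exact hone a
  · -- censoring
    intro hdet
    have h1 : (1 : Matrix (Fin np ⊕ Fin nm) (Fin np ⊕ Fin nm) ℝ) - (1 - γ • Q) = γ • Q :=
      sub_sub_cancel _ _
    rw [h1, zero_add, one_mul]
    have hinv : (γ • Q)⁻¹ = γ⁻¹ • Q⁻¹ := by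
      apply Matrix.inv_eq_right_inv
      rw [Matrix.smul_mul, Matrix.mul_smul, smul_smul, mul_inv_cancel₀ hγ.ne', one_smul,
        Matrix.mul_nonsing_inv _ hdet]
    rw [hinv, Matrix.smul_mul, Matrix.mul_smul, smul_smul, inv_mul_cancel₀ hγ.ne', one_smul]
end

section
/- Suppose all diagonal entries of R are nonnegative and there exists a row vector ξ ∈ ℝ^{1×n} with ξ > 0 and ξT = 0. Then Q is invertible with Q⁻¹ ≥ 0 (i.e., Q is a nonsingular M-matrix), the matrix P₀ = Q⁻¹R is stochastic (P₀ ≥ 0 and P₀𝟏 = 𝟏), and ξ|C| P₀ = ξ|C|. -/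
open Matrix

open Finset in
lemma zmat_mono {ι : Type*} [Fintype ι] [DecidableEq ι] [Nonempty ι]
    (M : Matrix ι ι ℝ) (hoff : ∀ i j, i ≠ j → M i j ≤ 0)
    (x : ι → ℝ) (hx : ∀ i, 0 < x i) (hMx : ∀ i, 0 < (M *ᵥ x) i)
    (y : ι → ℝ) (hy : ∀ i, 0 ≤ (M *ᵥ y) i) : ∀ i, 0 ≤ y i := by
  by_contra hcon
  push_neg at hcon
  obtain ⟨k, -, hk⟩ := Finset.exists_min_image Finset.univ (fun i => y i / x i)
    ⟨Classical.arbitrary ι, Finset.mem_univ _⟩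
  set m := y k / x k with hm
  have hmneg : m < 0 := by
    obtain ⟨i, hi⟩ := hcon
    have h1 := hk i (mem_univ i)
    have h2 : y i / x i < 0 := div_neg_of_neg_of_pos hi (hx i)
    linarith
  have hz : ∀ j, m * x j ≤ y j := by
    intro j
    have h1 := hk j (mem_univ j)
    calc m * x j ≤ (y j / x j) * x j := mul_le_mul_of_nonneg_right h1 (hx j).le
      _ = y j := div_mul_cancel₀ _ (hx j).ne'
  have hzk : y k = m * x k := (div_mul_cancel₀ _ (hx k).ne').symm
  have hle : (M *ᵥ y) k ≤ m * (M *ᵥ x) k := by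
    have hterm : ∀ j, M k j * y j ≤ M k j * (m * x j) := by
      intro j
      rcases eq_or_ne k j with rfl | hne
      · rw [hzk]
      · exact mul_le_mul_of_nonpos_left (hz j) (hoff k j hne)
    calc (M *ᵥ y) k = ∑ j, M k j * y j := rfl
      _ ≤ ∑ j, M k j * (m * x j) := Finset.sum_le_sum fun j _ => hterm j
      _ = m * ∑ j, M k j * x j := by rw [Finset.mul_sum]; congr 1; funext j; ring
      _ = m * (M *ᵥ x) k := rfl
  nlinarith [hMx k, hy k]


open Finset in
lemma zmat_det_ne {ι : Type*} [Fintype ι] [DecidableEq ι] [Nonempty ι]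
    (M : Matrix ι ι ℝ) (hoff : ∀ i j, i ≠ j → M i j ≤ 0)
    (x : ι → ℝ) (hx : ∀ i, 0 < x i) (hMx : ∀ i, 0 < (M *ᵥ x) i) :
    M.det ≠ 0 := by
  intro hdet
  obtain ⟨v, hv, hMv⟩ := (Matrix.exists_mulVec_eq_zero_iff).2 hdet
  have h1 := zmat_mono M hoff x hx hMx v (by rw [hMv]; intro i; simp)
  have h2 := zmat_mono M hoff x hx hMx (-v) (by rw [Matrix.mulVec_neg, hMv]; intro i; simp)
  apply hv
  funext i
  have := h2 i
  simp only [Pi.neg_apply, neg_nonneg] at this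
  exact le_antisymm this (h1 i)


open Finset in
lemma zmat_inv_nonneg {ι : Type*} [Fintype ι] [DecidableEq ι] [Nonempty ι]
    (M : Matrix ι ι ℝ) (hoff : ∀ i j, i ≠ j → M i j ≤ 0)
    (x : ι → ℝ) (hx : ∀ i, 0 < x i) (hMx : ∀ i, 0 < (M *ᵥ x) i) :
    ∀ i j, 0 ≤ M⁻¹ i j := by
  intro i j
  have hdet : IsUnit M.det := isUnit_iff_ne_zero.2 (zmat_det_ne M hoff x hx hMx)
  have hMM : M * M⁻¹ = 1 := Matrix.mul_nonsing_inv M hdet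
  have key := zmat_mono M hoff x hx hMx (M⁻¹ *ᵥ Pi.single j 1) ?_
  · have := key i
    rw [Matrix.mulVec_single] at this
    simpa using this
  · rw [Matrix.mulVec_mulVec, hMM]
    intro l
    rw [Matrix.one_mulVec]
    rcases eq_or_ne l j with rfl | h
    · simp
    · simp [Pi.single_apply, h]


/-- If all diagonal entries of R are nonnegative and there is a row vector
ξ > 0 with ξT = 0, then Q is a nonsingular M-matrix (Q invertible with Q⁻¹ ≥ 0),
P₀ = Q⁻¹R is stochastic, and ξ|C|·P₀ = ξ|C|. -/
theorem stmt3 (np nm : ℕ) (hnp : 1 ≤ np) (hnm : 1 ≤ nm)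
    (T : Matrix (Fin np ⊕ Fin nm) (Fin np ⊕ Fin nm) ℝ)
    (hTod : ∀ i j, i ≠ j → 0 ≤ T i j)
    (hT1 : T *ᵥ 1 = 0)
    (c : Fin np ⊕ Fin nm → ℝ)
    (hcp : ∀ i : Fin np, 0 < c (Sum.inl i))
    (hcm : ∀ i : Fin nm, c (Sum.inr i) < 0)
    (α β : ℝ) (hα : 0 ≤ α) (hβ : 0 ≤ β)
    (Q R : Matrix (Fin np ⊕ Fin nm) (Fin np ⊕ Fin nm) ℝ)
    (hQ : Q = fromBlocks
      (diagonal (fun i => c (Sum.inl i)) - α • T.toBlocks₁₁) (-(β • T.toBlocks₁₂))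
      (-(α • T.toBlocks₂₁)) (diagonal (fun i => -c (Sum.inr i)) - β • T.toBlocks₂₂))
    (hR : R = fromBlocks
      (diagonal (fun i => c (Sum.inl i)) + β • T.toBlocks₁₁) (α • T.toBlocks₁₂)
      (β • T.toBlocks₂₁) (diagonal (fun i => -c (Sum.inr i)) + α • T.toBlocks₂₂))
    (hRdiag : ∀ i, 0 ≤ R i i)
    (ξ : Fin np ⊕ Fin nm → ℝ) (hξpos : ∀ i, 0 < ξ i) (hξT : ξ ᵥ* T = 0) :
    IsUnit Q.det ∧
    (∀ i j, 0 ≤ Q⁻¹ i j) ∧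
    (∀ i j, 0 ≤ (Q⁻¹ * R) i j) ∧
    ((Q⁻¹ * R) *ᵥ 1 = 1) ∧
    ((fun i => ξ i * |c i|) ᵥ* (Q⁻¹ * R) = fun i => ξ i * |c i|) := by
  haveI : Nonempty (Fin np ⊕ Fin nm) := ⟨Sum.inl ⟨0, hnp⟩⟩
  set a : Fin np ⊕ Fin nm → ℝ := Sum.elim (fun _ => α) (fun _ => β) with ha
  set b : Fin np ⊕ Fin nm → ℝ := Sum.elim (fun _ => β) (fun _ => α) with hb
  set w : Fin np ⊕ Fin nm → ℝ := fun i => ξ i * |c i| with hw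
  have hcne : ∀ i, c i ≠ 0 := by
    rintro (i | i)
    · exact (hcp i).ne'
    · exact (hcm i).ne
  have habs : ∀ i, |c i| = Sum.elim (fun i => c (Sum.inl i)) (fun i => -c (Sum.inr i)) i := by
    rintro (i | i)
    · exact abs_of_pos (hcp i)
    · exact abs_of_neg (hcm i)
  have hQ' : Q = diagonal (fun i => |c i|) - T * diagonal a := by
    rw [hQ]
    ext i j
    rcases i with i | i <;> rcases j with j | j <;>
      simp [Matrix.fromBlocks, Matrix.toBlocks₁₁, Matrix.toBlocks₁₂, Matrix.toBlocks₂₁,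
        Matrix.toBlocks₂₂, Matrix.mul_diagonal, Matrix.diagonal_apply, habs, ha,
        Matrix.sub_apply, mul_comm]
  have hR' : R = diagonal (fun i => |c i|) + T * diagonal b := by
    rw [hR]
    ext i j
    rcases i with i | i <;> rcases j with j | j <;>
      simp [Matrix.fromBlocks, Matrix.toBlocks₁₁, Matrix.toBlocks₁₂, Matrix.toBlocks₂₁,
        Matrix.toBlocks₂₂, Matrix.mul_diagonal, Matrix.diagonal_apply, habs, hb,
        Matrix.add_apply, mul_comm]
  have hanonneg : ∀ j, 0 ≤ a j := by rintro (j | j) <;> simpa [ha]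
  have hbnonneg : ∀ j, 0 ≤ b j := by rintro (j | j) <;> simpa [hb]
  have hξQ : ξ ᵥ* Q = w := by
    rw [hQ', Matrix.vecMul_sub, ← Matrix.vecMul_vecMul, hξT, Matrix.zero_vecMul, sub_zero]
    funext j
    simp [hw, Matrix.vecMul_diagonal]
  have hξR : ξ ᵥ* R = w := by
    rw [hR', Matrix.vecMul_add, ← Matrix.vecMul_vecMul, hξT, Matrix.zero_vecMul, add_zero]
    funext j
    simp [hw, Matrix.vecMul_diagonal]
  have hdiagmul : ∀ d : Fin np ⊕ Fin nm → ℝ,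
      (T * diagonal d) *ᵥ (1 : Fin np ⊕ Fin nm → ℝ) = T *ᵥ d := by
    intro d
    funext i
    simp [Matrix.mulVec, Matrix.mul_diagonal, dotProduct]
  have hQ1R1 : Q *ᵥ 1 = R *ᵥ 1 := by
    rw [hQ', hR', Matrix.sub_mulVec, Matrix.add_mulVec, hdiagmul, hdiagmul]
    have hab : a + b = (α + β) • (1 : Fin np ⊕ Fin nm → ℝ) := by
      funext i
      rcases i with i | i <;> simp [ha, hb] <;> ring
    have hsum : T *ᵥ a + T *ᵥ b = 0 := by
      rw [← Matrix.mulVec_add, hab, Matrix.mulVec_smul, hT1, smul_zero]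
    have hTb : T *ᵥ b = -(T *ᵥ a) := by
      rw [eq_neg_iff_add_eq_zero, add_comm]; exact hsum
    rw [hTb]
    abel
  have hQoff : ∀ i j, i ≠ j → Q i j ≤ 0 := by
    intro i j hij
    rw [hQ']
    have h1 : 0 ≤ T i j * a j := mul_nonneg (hTod i j hij) (hanonneg j)
    simp only [Matrix.sub_apply, Matrix.mul_diagonal, Matrix.diagonal_apply_ne _ hij]
    linarith
  have hRnn : ∀ i j, 0 ≤ R i j := by
    intro i j
    rcases eq_or_ne i j with rfl | h
    · exact hRdiag i
    · rw [hR']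
      have h1 : 0 ≤ T i j * b j := mul_nonneg (hTod i j h) (hbnonneg j)
      simp only [Matrix.add_apply, Matrix.mul_diagonal, Matrix.diagonal_apply_ne _ h]
      linarith
  have hwpos : ∀ i, 0 < w i := fun i => mul_pos (hξpos i) (abs_pos.2 (hcne i))
  have hMoff : ∀ i j, i ≠ j → Qᵀ i j ≤ 0 := fun i j h => hQoff j i (Ne.symm h)
  have hMx : ∀ i, 0 < (Qᵀ *ᵥ ξ) i := by
    intro i
    rw [Matrix.mulVec_transpose, hξQ]
    exact hwpos i
  have hdetT := zmat_det_ne Qᵀ hMoff ξ hξpos hMx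
  have hdet : IsUnit Q.det := isUnit_iff_ne_zero.2 (by
    rw [← Matrix.det_transpose]; exact hdetT)
  have hinvT := zmat_inv_nonneg Qᵀ hMoff ξ hξpos hMx
  have hQinv : ∀ i j, 0 ≤ Q⁻¹ i j := by
    intro i j
    have := hinvT j i
    rwa [← Matrix.transpose_nonsing_inv, Matrix.transpose_apply] at this
  refine ⟨hdet, hQinv, ?_, ?_, ?_⟩
  · intro i j
    rw [Matrix.mul_apply]
    exact Finset.sum_nonneg fun k _ => mul_nonneg (hQinv i k) (hRnn k j)
  · rw [← Matrix.mulVec_mulVec, ← hQ1R1, Matrix.mulVec_mulVec,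
      Matrix.nonsing_inv_mul Q hdet, Matrix.one_mulVec]
  · have h1 : w ᵥ* Q⁻¹ = ξ := by
      rw [← hξQ, Matrix.vecMul_vecMul, Matrix.mul_nonsing_inv Q hdet, Matrix.vecMul_one]
    show w ᵥ* (Q⁻¹ * R) = w
    rw [← Matrix.vecMul_vecMul, h1, hξR]
end

section
/- Let P = [[E,G],[H,F]] be an n×n stochastic matrix such that I − GH and I − HG are invertible with (I−GH)⁻¹ ≥ 0 and (I−HG)⁻¹ ≥ 0. Then 𝓕(P) is stochastic. Moreover, for every row vector v ∈ ℝ^{1×n} with vP = v one has v·𝓕(P) = v. -/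
open Matrix

/-- One step of the structure-preserving doubling map 𝓕 applied to the blocks
E, G, H, F of a matrix P = [[E,G],[H,F]]. -/
noncomputable def doubling {np nm : ℕ}
    (E : Matrix (Fin np) (Fin np) ℝ) (G : Matrix (Fin np) (Fin nm) ℝ)
    (H : Matrix (Fin nm) (Fin np) ℝ) (F : Matrix (Fin nm) (Fin nm) ℝ) :
    Matrix (Fin np ⊕ Fin nm) (Fin np ⊕ Fin nm) ℝ :=
  Matrix.fromBlocks
    (E * (1 - G * H)⁻¹ * E) (G + E * (1 - G * H)⁻¹ * (G * F))
    (H + F * (1 - H * G)⁻¹ * (H * E)) (F * (1 - H * G)⁻¹ * F)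

/-- Entrywise nonnegativity is preserved by matrix multiplication. -/
lemma mul_entry_nonneg {l m n : Type*} [Fintype m]
    (M : Matrix l m ℝ) (N : Matrix m n ℝ)
    (hM : ∀ i j, 0 ≤ M i j) (hN : ∀ i j, 0 ≤ N i j) :
    ∀ i j, 0 ≤ (M * N) i j := fun i j => by
  rw [Matrix.mul_apply]
  exact Finset.sum_nonneg fun k _ => mul_nonneg (hM i k) (hN k j)

/-- The swap identity H (1-GH)⁻¹ = (1-HG)⁻¹ H. -/
lemma swap_inv {a b : ℕ} (G : Matrix (Fin a) (Fin b) ℝ) (H : Matrix (Fin b) (Fin a) ℝ)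
    (hGH : IsUnit (1 - G * H).det) (hHG : IsUnit (1 - H * G).det) :
    H * (1 - G * H)⁻¹ = (1 - H * G)⁻¹ * H := by
  have h1 : (1 - H * G)⁻¹ * (1 - H * G) = 1 := Matrix.nonsing_inv_mul _ hHG
  have h2 : (1 - G * H) * (1 - G * H)⁻¹ = 1 := Matrix.mul_nonsing_inv _ hGH
  have key : (1 - H * G) * H = H * (1 - G * H) := by
    rw [Matrix.sub_mul, Matrix.mul_sub, Matrix.one_mul, Matrix.mul_one,
      Matrix.mul_assoc]
  calc H * (1 - G * H)⁻¹
      = ((1 - H * G)⁻¹ * (1 - H * G)) * (H * (1 - G * H)⁻¹) := by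
        rw [h1, Matrix.one_mul]
    _ = (1 - H * G)⁻¹ * (((1 - H * G) * H) * (1 - G * H)⁻¹) := by
        simp only [Matrix.mul_assoc]
    _ = (1 - H * G)⁻¹ * (H * ((1 - G * H) * (1 - G * H)⁻¹)) := by
        rw [key]; simp only [Matrix.mul_assoc]
    _ = (1 - H * G)⁻¹ * H := by rw [h2, Matrix.mul_one]

/-- Row-sum lemma: the top blocks of the doubling map preserve row sums. -/
lemma row_lem {a b : ℕ} (E : Matrix (Fin a) (Fin a) ℝ) (G : Matrix (Fin a) (Fin b) ℝ)
    (H : Matrix (Fin b) (Fin a) ℝ) (F : Matrix (Fin b) (Fin b) ℝ)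
    (u : Fin a → ℝ) (w : Fin b → ℝ)
    (hGH : IsUnit (1 - G * H).det)
    (hE : E *ᵥ u + G *ᵥ w = u) (hF : H *ᵥ u + F *ᵥ w = w) :
    (E * (1 - G * H)⁻¹ * E) *ᵥ u + (G + E * (1 - G * H)⁻¹ * (G * F)) *ᵥ w = u := by
  have hF' : F *ᵥ w = w - H *ᵥ u := eq_sub_of_add_eq' hF
  have hE' : E *ᵥ u = u - G *ᵥ w := eq_sub_of_add_eq hE
  have h3 : E *ᵥ u + (G * F) *ᵥ w = (1 - G * H) *ᵥ u := by
    rw [← Matrix.mulVec_mulVec, hF', Matrix.mulVec_sub, hE',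
      Matrix.sub_mulVec, Matrix.one_mulVec, Matrix.mulVec_mulVec]
    abel
  have hinv : (1 - G * H)⁻¹ * (1 - G * H) = 1 := Matrix.nonsing_inv_mul _ hGH
  calc (E * (1 - G * H)⁻¹ * E) *ᵥ u + (G + E * (1 - G * H)⁻¹ * (G * F)) *ᵥ w
      = E *ᵥ ((1 - G * H)⁻¹ *ᵥ (E *ᵥ u)) + (G *ᵥ w
        + E *ᵥ ((1 - G * H)⁻¹ *ᵥ ((G * F) *ᵥ w))) := by
        rw [Matrix.add_mulVec]
        simp only [Matrix.mulVec_mulVec, Matrix.mul_assoc]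
    _ = G *ᵥ w + E *ᵥ ((1 - G * H)⁻¹ *ᵥ (E *ᵥ u + (G * F) *ᵥ w)) := by
        rw [Matrix.mulVec_add, Matrix.mulVec_add]; abel
    _ = G *ᵥ w + E *ᵥ u := by
        rw [h3]
        simp only [Matrix.mulVec_mulVec]
        rw [hinv, Matrix.mul_one]
    _ = u := by rw [add_comm]; exact hE

/-- Fixed-vector lemma for the left blocks. -/
lemma vec_lem {a b : ℕ} (E : Matrix (Fin a) (Fin a) ℝ) (G : Matrix (Fin a) (Fin b) ℝ)
    (H : Matrix (Fin b) (Fin a) ℝ) (F : Matrix (Fin b) (Fin b) ℝ)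
    (vp : Fin a → ℝ) (vm : Fin b → ℝ)
    (hGH : IsUnit (1 - G * H).det) (hHG : IsUnit (1 - H * G).det)
    (h1 : vp ᵥ* E + vm ᵥ* H = vp) (h2 : vp ᵥ* G + vm ᵥ* F = vm) :
    vp ᵥ* (E * (1 - G * H)⁻¹ * E) + vm ᵥ* (H + F * (1 - H * G)⁻¹ * (H * E)) = vp := by
  have hE' : vp ᵥ* E = vp - vm ᵥ* H := eq_sub_of_add_eq h1
  have hF' : vm ᵥ* F = vm - vp ᵥ* G := eq_sub_of_add_eq' h2
  have hswapH : H * (1 - G * H)⁻¹ = (1 - H * G)⁻¹ * H := swap_inv G H hGH hHG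
  have hswapG : G * (1 - H * G)⁻¹ = (1 - G * H)⁻¹ * G := swap_inv H G hHG hGH
  have hinv : (1 - G * H)⁻¹ * (1 - G * H) = 1 := Matrix.nonsing_inv_mul _ hGH
  have key1 : vp ᵥ* (E * (1 - G * H)⁻¹ * E)
      = vp ᵥ* ((1 - G * H)⁻¹ * E) - vm ᵥ* (H * ((1 - G * H)⁻¹ * E)) := by
    rw [Matrix.mul_assoc, ← Matrix.vecMul_vecMul, hE', Matrix.sub_vecMul,
      Matrix.vecMul_vecMul]
  have key2 : vm ᵥ* (F * (1 - H * G)⁻¹ * (H * E))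
      = vm ᵥ* ((1 - H * G)⁻¹ * (H * E)) - vp ᵥ* (G * ((1 - H * G)⁻¹ * (H * E))) := by
    rw [Matrix.mul_assoc, ← Matrix.vecMul_vecMul, hF', Matrix.sub_vecMul,
      Matrix.vecMul_vecMul]
  have e1 : H * ((1 - G * H)⁻¹ * E) = (1 - H * G)⁻¹ * (H * E) := by
    rw [← Matrix.mul_assoc, hswapH, Matrix.mul_assoc]
  have e2 : G * ((1 - H * G)⁻¹ * (H * E)) = (1 - G * H)⁻¹ * (G * H * E) := by
    rw [← Matrix.mul_assoc, hswapG]; simp only [Matrix.mul_assoc]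
  have e3 : vp ᵥ* ((1 - G * H)⁻¹ * E) - vp ᵥ* ((1 - G * H)⁻¹ * (G * H * E))
      = vp ᵥ* E := by
    rw [← Matrix.vecMul_sub, ← Matrix.mul_sub]
    have : E - G * H * E = (1 - G * H) * E := by noncomm_ring
    rw [this, ← Matrix.mul_assoc, hinv, Matrix.one_mul]
  calc vp ᵥ* (E * (1 - G * H)⁻¹ * E) + vm ᵥ* (H + F * (1 - H * G)⁻¹ * (H * E))
      = vp ᵥ* (E * (1 - G * H)⁻¹ * E) + (vm ᵥ* H + vm ᵥ* (F * (1 - H * G)⁻¹ * (H * E))) := by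
        rw [Matrix.vecMul_add]
    _ = (vp ᵥ* ((1 - G * H)⁻¹ * E) - vp ᵥ* ((1 - G * H)⁻¹ * (G * H * E))) + vm ᵥ* H := by
        rw [key1, key2, e1, e2]; abel
    _ = vp ᵥ* E + vm ᵥ* H := by rw [e3]
    _ = vp := h1

/-- If P = [[E,G],[H,F]] is stochastic and I − GH, I − HG are invertible
with nonnegative inverses, then 𝓕(P) is stochastic, and every row vector v with vP = v
also satisfies v·𝓕(P) = v. -/
theorem stmt4 (np nm : ℕ) (hnp : 1 ≤ np) (hnm : 1 ≤ nm)
    (E : Matrix (Fin np) (Fin np) ℝ) (G : Matrix (Fin np) (Fin nm) ℝ)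
    (H : Matrix (Fin nm) (Fin np) ℝ) (F : Matrix (Fin nm) (Fin nm) ℝ)
    (hP0 : ∀ i j, 0 ≤ fromBlocks E G H F i j)
    (hP1 : ∀ i, ∑ j, fromBlocks E G H F i j = 1)
    (hGH : IsUnit (1 - G * H).det) (hHG : IsUnit (1 - H * G).det)
    (hGHpos : ∀ i j, 0 ≤ ((1 - G * H)⁻¹ : Matrix (Fin np) (Fin np) ℝ) i j)
    (hHGpos : ∀ i j, 0 ≤ ((1 - H * G)⁻¹ : Matrix (Fin nm) (Fin nm) ℝ) i j) :
    (∀ i j, 0 ≤ doubling E G H F i j) ∧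
    (∀ i, ∑ j, doubling E G H F i j = 1) ∧
    (∀ v : Fin np ⊕ Fin nm → ℝ,
      v ᵥ* fromBlocks E G H F = v → v ᵥ* doubling E G H F = v) := by
  have hE0 : ∀ i j, 0 ≤ E i j := fun i j => by simpa using hP0 (Sum.inl i) (Sum.inl j)
  have hG0 : ∀ i j, 0 ≤ G i j := fun i j => by simpa using hP0 (Sum.inl i) (Sum.inr j)
  have hH0 : ∀ i j, 0 ≤ H i j := fun i j => by simpa using hP0 (Sum.inr i) (Sum.inl j)
  have hF0 : ∀ i j, 0 ≤ F i j := fun i j => by simpa using hP0 (Sum.inr i) (Sum.inr j)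
  -- row sums as mulVec identities
  set u : Fin np → ℝ := fun _ => 1 with hu
  set w : Fin nm → ℝ := fun _ => 1 with hw
  have hEsum : E *ᵥ u + G *ᵥ w = u := by
    funext i
    have := hP1 (Sum.inl i)
    rw [Fintype.sum_sum_type] at this
    simpa [Matrix.mulVec, dotProduct, hu, hw] using this
  have hFsum : H *ᵥ u + F *ᵥ w = w := by
    funext i
    have := hP1 (Sum.inr i)
    rw [Fintype.sum_sum_type] at this
    simpa [Matrix.mulVec, dotProduct, hu, hw] using this
  refine ⟨?_, ?_, ?_⟩
  · rintro (i | i) (j | j)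
    · simpa [doubling] using
        mul_entry_nonneg _ _ (mul_entry_nonneg _ _ hE0 hGHpos) hE0 i j
    · simpa [doubling] using add_nonneg (hG0 i j)
        (mul_entry_nonneg _ _ (mul_entry_nonneg _ _ hE0 hGHpos)
          (mul_entry_nonneg _ _ hG0 hF0) i j)
    · simpa [doubling] using add_nonneg (hH0 i j)
        (mul_entry_nonneg _ _ (mul_entry_nonneg _ _ hF0 hHGpos)
          (mul_entry_nonneg _ _ hH0 hE0) i j)
    · simpa [doubling] using
        mul_entry_nonneg _ _ (mul_entry_nonneg _ _ hF0 hHGpos) hF0 i j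
  · have hFsum' : F *ᵥ w + H *ᵥ u = w := by rw [add_comm]; exact hFsum
    have hEsum' : G *ᵥ w + E *ᵥ u = u := by rw [add_comm]; exact hEsum
    have h1 := row_lem E G H F u w hGH hEsum hFsum
    have h2 := row_lem F H G E w u hHG hFsum' hEsum'
    rintro (i | i)
    · have := congrFun h1 i
      rw [Fintype.sum_sum_type]
      simpa [doubling, Matrix.mulVec, dotProduct, hu, hw] using this
    · have := congrFun h2 i
      rw [Fintype.sum_sum_type, add_comm]
      simpa [doubling, Matrix.mulVec, dotProduct, hu, hw] using this
  · intro v hv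
    set vp : Fin np → ℝ := v ∘ Sum.inl with hvp
    set vm : Fin nm → ℝ := v ∘ Sum.inr with hvm
    rw [Matrix.vecMul_fromBlocks] at hv
    have h1 : vp ᵥ* E + vm ᵥ* H = vp := funext fun j => congrFun hv (Sum.inl j)
    have h2 : vp ᵥ* G + vm ᵥ* F = vm := funext fun j => congrFun hv (Sum.inr j)
    have k1 := vec_lem E G H F vp vm hGH hHG h1 h2
    have h1' : vm ᵥ* H + vp ᵥ* E = vp := by rw [add_comm]; exact h1
    have h2' : vm ᵥ* F + vp ᵥ* G = vm := by rw [add_comm]; exact h2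
    have k2 := vec_lem F H G E vm vp hHG hGH h2' h1'
    rw [doubling, Matrix.vecMul_fromBlocks]
    funext j
    cases j with
    | inl j =>
      simp only [Sum.elim_inl]
      exact congrFun k1 j
    | inr j =>
      have k2' : vp ᵥ* (G + E * (1 - G * H)⁻¹ * (G * F))
          + vm ᵥ* (F * (1 - H * G)⁻¹ * F) = vm := by rw [add_comm]; exact k2
      simp only [Sum.elim_inr]
      exact congrFun k2' j
end

section
/- Let P = [[E,G],[H,F]] be any n×n real matrix and m ≥ 1 an integer. For every row vector v ∈ ℝ^{1×n} with vP = v, the row vector 𝟏ₘᵀ ⊗ v (m concatenated copies of v) satisfies (𝟏ₘᵀ ⊗ v) · P⁽ᵐ⁾ = 𝟏ₘᵀ ⊗ v, where P⁽ᵐ⁾ = Z_m⁻¹ ⊗ A₋ + I_m ⊗ A₌ + Z_m ⊗ A₊. -/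
open Matrix Kronecker

/-- The m×m circulant generator matrix Z_m, with (Z_m)_{ij} = 1 iff j − i ≡ 1 (mod m). -/
def Zc (m : ℕ) : Matrix (Fin m) (Fin m) ℝ :=
  Matrix.of fun i j => if (i.val + 1) % m = j.val then 1 else 0

lemma Zc_apply {m : ℕ} [NeZero m] (i j : Fin m) :
    Zc m i j = if i + 1 = j then 1 else 0 := by
  have h2 : (i.val + 1 % m) % m = (i.val + 1) % m := by
    conv_lhs => rw [← Nat.mod_eq_of_lt i.isLt]
    rw [← Nat.add_mod]
  have hval : ((i + 1 : Fin m)).val = (i.val + 1) % m := by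
    rw [Fin.add_def]
    show (i.val + (1 : Fin m).val) % m = (i.val + 1) % m
    rw [Fin.val_one']
    exact h2
  have h : (i + 1 = j) ↔ ((i.val + 1) % m = j.val) := by
    rw [Fin.ext_iff, hval]
  simp only [Zc, Matrix.of_apply]
  exact if_congr h.symm rfl rfl

lemma Zc_colsum {m : ℕ} [NeZero m] (j : Fin m) :
    ∑ i, Zc m i j = 1 := by
  have : ∀ i : Fin m, Zc m i j = if i = j - 1 then 1 else 0 := by
    intro i
    rw [Zc_apply]
    exact if_congr eq_sub_iff_add_eq.symm rfl rfl
  simp [this]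

lemma Zc_mul_transpose {m : ℕ} [NeZero m] :
    Zc m * (Zc m)ᵀ = 1 := by
  ext i k
  simp only [Matrix.mul_apply, Matrix.transpose_apply, Zc_apply, ite_mul, one_mul,
    zero_mul, Finset.sum_ite_eq, Finset.mem_univ, if_true]
  rw [Matrix.one_apply]
  simp [eq_comm, add_left_inj]

lemma Zc_inv_colsum {m : ℕ} [NeZero m] (j : Fin m) :
    ∑ i, (Zc m)⁻¹ i j = 1 := by
  rw [Matrix.inv_eq_right_inv Zc_mul_transpose]
  simp only [Matrix.transpose_apply, Zc_apply]
  simp [Finset.sum_ite_eq]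

lemma one_colsum {m : ℕ} (j : Fin m) :
    ∑ i, (1 : Matrix (Fin m) (Fin m) ℝ) i j = 1 := by
  simp [Matrix.one_apply]

lemma key_lemma {m : ℕ} {α : Type*} [Fintype α] [DecidableEq α]
    (A : Matrix (Fin m) (Fin m) ℝ) (hA : ∀ j, ∑ i, A i j = 1)
    (B : Matrix α α ℝ) (v : α → ℝ) :
    (fun x : Fin m × α => v x.2) ᵥ* (A ⊗ₖ B) = fun x => (v ᵥ* B) x.2 := by
  funext x
  obtain ⟨j, b⟩ := x
  simp only [Matrix.vecMul, dotProduct, Fintype.sum_prod_type,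
    Matrix.kroneckerMap_apply]
  rw [Finset.sum_comm]
  calc ∑ a, ∑ i, v a * (A i j * B a b)
      = ∑ a, v a * B a b * ∑ i, A i j := by
        refine Finset.sum_congr rfl fun a _ => ?_
        rw [Finset.mul_sum]
        exact Finset.sum_congr rfl fun i _ => by ring
    _ = ∑ a, v a * B a b := by simp [hA j]

/-- For P = [[E,G],[H,F]] with A₊ = [[E,0],[0,0]], A₌ = [[0,G],[H,0]],
A₋ = [[0,0],[0,F]], and for every row vector v with vP = v, the row vector 𝟏ₘᵀ ⊗ v
satisfies (𝟏ₘᵀ ⊗ v)·P⁽ᵐ⁾ = 𝟏ₘᵀ ⊗ v, where P⁽ᵐ⁾ = Z_m⁻¹ ⊗ A₋ + I_m ⊗ A₌ + Z_m ⊗ A₊. -/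
theorem stmt5 (np nm : ℕ) (hnp : 1 ≤ np) (hnm : 1 ≤ nm) (m : ℕ) (hm : 1 ≤ m)
    (E : Matrix (Fin np) (Fin np) ℝ) (G : Matrix (Fin np) (Fin nm) ℝ)
    (H : Matrix (Fin nm) (Fin np) ℝ) (F : Matrix (Fin nm) (Fin nm) ℝ)
    (v : Fin np ⊕ Fin nm → ℝ)
    (hv : v ᵥ* fromBlocks E G H F = v) :
    (fun x : Fin m × (Fin np ⊕ Fin nm) => v x.2) ᵥ*
      ((Zc m)⁻¹ ⊗ₖ fromBlocks 0 0 0 F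
        + (1 : Matrix (Fin m) (Fin m) ℝ) ⊗ₖ fromBlocks 0 G H 0
        + Zc m ⊗ₖ fromBlocks E 0 0 0)
      = fun x => v x.2 := by
  haveI : NeZero m := ⟨by omega⟩
  rw [Matrix.vecMul_add, Matrix.vecMul_add,
    key_lemma _ Zc_inv_colsum _ v,
    key_lemma _ one_colsum _ v,
    key_lemma _ Zc_colsum _ v]
  funext x
  simp only [Pi.add_apply]
  have hsum : fromBlocks (0 : Matrix (Fin np) (Fin np) ℝ) 0 0 F + fromBlocks 0 G H 0
      + fromBlocks E 0 0 0 = fromBlocks E G H F := by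
    simp [Matrix.fromBlocks_add]
  have e : (v ᵥ* fromBlocks 0 0 0 F) x.2 + (v ᵥ* fromBlocks 0 G H 0) x.2
      + (v ᵥ* fromBlocks E 0 0 0) x.2 = (v ᵥ* fromBlocks E G H F) x.2 := by
    rw [← hsum]
    simp [Matrix.vecMul_add]
  rw [e, hv]
end

section
/- Let P = [[E,G],[H,F]] be an n×n real matrix such that I − GH and I − HG are invertible. Then I − A₌ is invertible, and A₌ + (A₊ + A₋)(I − A₌)⁻¹(A₊ + A₋) = 𝓕(P). Equivalently, censoring the top n×n block of the 2n×2n matrix P⁽²⁾ = [[A₌, A₊+A₋],[A₋+A₊, A₌]] yields exactly one step of the doubling iteration. -/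
open Matrix

/-- If I − GH and I − HG are invertible, then I − A₌ is invertible and
A₌ + (A₊ + A₋)(I − A₌)⁻¹(A₊ + A₋) equals one step of the doubling iteration
𝓕(P) = [[E(I−GH)⁻¹E, G + E(I−GH)⁻¹GF],[H + F(I−HG)⁻¹HE, F(I−HG)⁻¹F]]. -/
theorem stmt6 (np nm : ℕ) (hnp : 1 ≤ np) (hnm : 1 ≤ nm)
    (E : Matrix (Fin np) (Fin np) ℝ) (G : Matrix (Fin np) (Fin nm) ℝ)
    (H : Matrix (Fin nm) (Fin np) ℝ) (F : Matrix (Fin nm) (Fin nm) ℝ)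
    (hGH : IsUnit (1 - G * H).det) (hHG : IsUnit (1 - H * G).det) :
    IsUnit (1 - fromBlocks 0 G H 0).det ∧
    fromBlocks 0 G H 0
      + (fromBlocks E 0 0 0 + fromBlocks 0 0 0 F)
        * (1 - fromBlocks 0 G H 0)⁻¹
        * (fromBlocks E 0 0 0 + fromBlocks 0 0 0 F)
      = fromBlocks
          (E * (1 - G * H)⁻¹ * E) (G + E * (1 - G * H)⁻¹ * (G * F))
          (H + F * (1 - H * G)⁻¹ * (H * E)) (F * (1 - H * G)⁻¹ * F) := by
  have hM : (1 : Matrix (Fin np ⊕ Fin nm) (Fin np ⊕ Fin nm) ℝ) - fromBlocks 0 G H 0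
      = fromBlocks 1 (-G) (-H) 1 := by
    rw [← fromBlocks_one, sub_eq_add_neg, fromBlocks_neg, fromBlocks_add]
    simp
  have hGHinv : (1 - G * H) * (1 - G * H)⁻¹ = 1 := mul_nonsing_inv _ hGH
  have hGHinv' : (1 - G * H)⁻¹ * (1 - G * H) = 1 := nonsing_inv_mul _ hGH
  have hHGinv : (1 - H * G) * (1 - H * G)⁻¹ = 1 := mul_nonsing_inv _ hHG
  have hHGinv' : (1 - H * G)⁻¹ * (1 - H * G) = 1 := nonsing_inv_mul _ hHG
  have hcomm : G * (1 - H * G)⁻¹ = (1 - G * H)⁻¹ * G := by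
    have h1 : (1 - G * H) * G = G * (1 - H * G) := by
      simp [Matrix.sub_mul, Matrix.mul_sub, Matrix.mul_assoc]
    calc G * (1 - H * G)⁻¹
        = (1 - G * H)⁻¹ * ((1 - G * H) * G) * (1 - H * G)⁻¹ := by
          rw [← Matrix.mul_assoc, hGHinv', Matrix.one_mul]
      _ = (1 - G * H)⁻¹ * G * ((1 - H * G) * (1 - H * G)⁻¹) := by
          rw [h1]; simp [Matrix.mul_assoc]
      _ = (1 - G * H)⁻¹ * G := by rw [hHGinv, Matrix.mul_one]
  have hcomm' : H * (1 - G * H)⁻¹ = (1 - H * G)⁻¹ * H := by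
    have h1 : (1 - H * G) * H = H * (1 - G * H) := by
      simp [Matrix.sub_mul, Matrix.mul_sub, Matrix.mul_assoc]
    calc H * (1 - G * H)⁻¹
        = (1 - H * G)⁻¹ * ((1 - H * G) * H) * (1 - G * H)⁻¹ := by
          rw [← Matrix.mul_assoc, hHGinv', Matrix.one_mul]
      _ = (1 - H * G)⁻¹ * H * ((1 - G * H) * (1 - G * H)⁻¹) := by
          rw [h1]; simp [Matrix.mul_assoc]
      _ = (1 - H * G)⁻¹ * H := by rw [hGHinv, Matrix.mul_one]
  have hdet : IsUnit (1 - fromBlocks 0 G H 0).det := by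
    rw [hM, det_fromBlocks_one₁₁]
    simpa using hHG
  refine ⟨hdet, ?_⟩
  have hNinv : (1 - fromBlocks 0 G H 0)⁻¹
      = fromBlocks (1 - G * H)⁻¹ ((1 - G * H)⁻¹ * G) ((1 - H * G)⁻¹ * H) (1 - H * G)⁻¹ := by
    apply inv_eq_right_inv
    have h1 := hGHinv'
    rw [Matrix.mul_sub, Matrix.mul_one] at h1
    have h2 := hHGinv'
    rw [Matrix.mul_sub, Matrix.mul_one] at h2
    have e11 : (1 : Matrix (Fin np) (Fin np) ℝ) * (1 - G * H)⁻¹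
        + (-G) * ((1 - H * G)⁻¹ * H) = 1 := by
      rw [Matrix.one_mul, Matrix.neg_mul, ← Matrix.mul_assoc, hcomm, Matrix.mul_assoc,
        ← sub_eq_add_neg, h1]
    have e12 : (1 : Matrix (Fin np) (Fin np) ℝ) * ((1 - G * H)⁻¹ * G)
        + (-G) * (1 - H * G)⁻¹ = 0 := by
      rw [Matrix.one_mul, Matrix.neg_mul, hcomm, add_neg_cancel]
    have e21 : (-H) * (1 - G * H)⁻¹ + (1 : Matrix (Fin nm) (Fin nm) ℝ) * ((1 - H * G)⁻¹ * H) = 0 := by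
      rw [Matrix.one_mul, Matrix.neg_mul, hcomm', neg_add_cancel]
    have e22 : (-H) * ((1 - G * H)⁻¹ * G) + (1 : Matrix (Fin nm) (Fin nm) ℝ) * (1 - H * G)⁻¹ = 1 := by
      rw [Matrix.one_mul, Matrix.neg_mul, ← Matrix.mul_assoc, hcomm', Matrix.mul_assoc,
        add_comm, ← sub_eq_add_neg, h2]
    rw [hM, fromBlocks_multiply, e11, e12, e21, e22, fromBlocks_one]
  rw [hNinv]
  have hsum : fromBlocks E 0 0 0 + fromBlocks 0 0 0 F = fromBlocks E 0 0 F := by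
    rw [fromBlocks_add]; simp
  rw [hsum, fromBlocks_multiply, fromBlocks_multiply, fromBlocks_add]
  congr 1 <;> simp [Matrix.mul_assoc] <;> abel
end

section
/- Let P = [[E,G],[H,F]] be an n×n real matrix such that I − GH and I − HG are invertible, let 𝓕(P) = [[Ê,Ĝ],[Ĥ,F̂]] and write Â₊ = [[Ê,0],[0,0]], Â₌ = [[0,Ĝ],[Ĥ,0]], Â₋ = [[0,0],[0,F̂]]. Then for every integer m ≥ 1: I_m ⊗ A₌ + (I_m ⊗ A₋ + Z_m ⊗ A₊) · (I_m ⊗ (I − A₌))⁻¹ · (Z_m⁻¹ ⊗ A₋ + I_m ⊗ A₊) = Z_m⁻¹ ⊗ Â₋ + I_m ⊗ Â₌ + Z_m ⊗ Â₊. (This is the inductive censoring step showing that censoring the odd-numbered blocks of P⁽²ᵐ⁾ produces (𝓕(P))⁽ᵐ⁾.) -/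
open Matrix Kronecker

/-!
Since `Z_m` is a permutation matrix, `Z_m Z_m⁻¹ = I`, so expanding the product leaves exactly one
term for each of `Z_m⁻¹`, `I`, `Z_m`, with coefficients `A₋ N A₋`, `A₌ + A₋ N A₊ + A₊ N A₋` and
`A₊ N A₊`, where `N = (I − A₌)⁻¹`. Inverting `I − A₌` blockwise gives
`N = [[(I−GH)⁻¹, (I−GH)⁻¹G], [(I−HG)⁻¹H, (I−HG)⁻¹]]`, and the three coefficients are then exactly
`Â₋`, `Â₌`, `Â₊`.
-/

namespace Matrix

variable {l n p : Type*} [Fintype l] [Fintype n] [Fintype p] {R : Type*} [CommRing R]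

theorem inv_one_sub_fromBlocks_offDiag [DecidableEq l] [DecidableEq n]
    (G : Matrix l n R) (H : Matrix n l R)
    (hGH : IsUnit (1 - G * H).det) (hHG : IsUnit (1 - H * G).det) :
    (1 - fromBlocks 0 G H 0)⁻¹
      = fromBlocks (1 - G * H)⁻¹ ((1 - G * H)⁻¹ * G) ((1 - H * G)⁻¹ * H) (1 - H * G)⁻¹ := by
  refine inv_eq_left_inv ?_
  have hM : 1 - fromBlocks 0 G H 0 = fromBlocks 1 (-G) (-H) (1 : Matrix n n R) := by
    rw [← fromBlocks_one, sub_eq_add_neg, fromBlocks_neg, fromBlocks_add]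
    simp
  rw [hM, fromBlocks_multiply, ← fromBlocks_one]
  have h₁ := nonsing_inv_mul _ hGH
  have h₂ := nonsing_inv_mul _ hHG
  rw [mul_sub, mul_one] at h₁ h₂
  congr 1 <;> simp [Matrix.mul_assoc, ← sub_eq_add_neg, neg_add_eq_sub, h₁, h₂]

theorem fromBlocks_diag_mul_mul (E₁ E₂ : Matrix l l R) (F₁ F₂ : Matrix n n R)
    (A : Matrix l l R) (B : Matrix l n R) (C : Matrix n l R) (D : Matrix n n R) :
    fromBlocks E₁ 0 0 F₁ * fromBlocks A B C D * fromBlocks E₂ 0 0 F₂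
      = fromBlocks (E₁ * A * E₂) (E₁ * B * F₂) (F₁ * C * E₂) (F₁ * D * F₂) := by
  simp [fromBlocks_multiply]

theorem one_kronecker_add_mul_one_kronecker_mul [DecidableEq l] {Z Z' : Matrix l l R}
    (hZ : Z * Z' = 1) (A B C N : Matrix p p R) :
    (1 : Matrix l l R) ⊗ₖ A + ((1 : Matrix l l R) ⊗ₖ B + Z ⊗ₖ C) * ((1 : Matrix l l R) ⊗ₖ N)
        * (Z' ⊗ₖ B + (1 : Matrix l l R) ⊗ₖ C)
      = Z' ⊗ₖ (B * N * B) + (1 : Matrix l l R) ⊗ₖ (A + B * N * C + C * N * B)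
        + Z ⊗ₖ (C * N * C) := by
  simp only [add_mul, mul_add, ← mul_kronecker_mul, one_mul, mul_one, hZ, kronecker_add]
  abel

end Matrix

theorem Zc_eq_permMatrix (m : ℕ) : Zc m = (finRotate m).permMatrix ℝ := by
  ext i j
  cases m with
  | zero => exact i.elim0
  | succ n => simp [Zc, Fin.ext_iff, Fin.val_add, eq_comm]

theorem isUnit_det_Zc (m : ℕ) : IsUnit (Zc m).det := by
  rw [Zc_eq_permMatrix, det_permutation]
  exact (Equiv.Perm.sign _).isUnit.map (Int.castRingHom ℝ)

theorem stmt7_general (np nm : ℕ)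
    (E : Matrix (Fin np) (Fin np) ℝ) (G : Matrix (Fin np) (Fin nm) ℝ)
    (H : Matrix (Fin nm) (Fin np) ℝ) (F : Matrix (Fin nm) (Fin nm) ℝ)
    (hGH : IsUnit (1 - G * H).det) (hHG : IsUnit (1 - H * G).det)
    (m : ℕ) :
    (1 : Matrix (Fin m) (Fin m) ℝ) ⊗ₖ fromBlocks 0 G H 0
      + ((1 : Matrix (Fin m) (Fin m) ℝ) ⊗ₖ fromBlocks 0 0 0 F + Zc m ⊗ₖ fromBlocks E 0 0 0)
        * ((1 : Matrix (Fin m) (Fin m) ℝ) ⊗ₖ (1 - fromBlocks 0 G H 0))⁻¹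
        * ((Zc m)⁻¹ ⊗ₖ fromBlocks 0 0 0 F + (1 : Matrix (Fin m) (Fin m) ℝ) ⊗ₖ fromBlocks E 0 0 0)
      = (Zc m)⁻¹ ⊗ₖ fromBlocks 0 0 0 (F * (1 - H * G)⁻¹ * F)
        + (1 : Matrix (Fin m) (Fin m) ℝ) ⊗ₖ
            fromBlocks 0 (G + E * (1 - G * H)⁻¹ * (G * F)) (H + F * (1 - H * G)⁻¹ * (H * E)) 0
        + Zc m ⊗ₖ fromBlocks (E * (1 - G * H)⁻¹ * E) 0 0 0 := by
  rw [inv_kronecker, inv_one,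
    one_kronecker_add_mul_one_kronecker_mul (mul_nonsing_inv _ (isUnit_det_Zc m)),
    inv_one_sub_fromBlocks_offDiag G H hGH hHG]
  simp only [fromBlocks_diag_mul_mul, fromBlocks_add]
  simp [Matrix.mul_assoc]

/-- The inductive censoring step: with A₊ = [[E,0],[0,0]], A₌ = [[0,G],[H,0]],
A₋ = [[0,0],[0,F]] and Â₊, Â₌, Â₋ built likewise from the blocks Ê, Ĝ, Ĥ, F̂ of 𝓕(P),
for every m ≥ 1,
I_m ⊗ A₌ + (I_m ⊗ A₋ + Z_m ⊗ A₊)·(I_m ⊗ (I − A₌))⁻¹·(Z_m⁻¹ ⊗ A₋ + I_m ⊗ A₊)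
  = Z_m⁻¹ ⊗ Â₋ + I_m ⊗ Â₌ + Z_m ⊗ Â₊. -/
theorem stmt7 (np nm : ℕ) (hnp : 1 ≤ np) (hnm : 1 ≤ nm)
    (E : Matrix (Fin np) (Fin np) ℝ) (G : Matrix (Fin np) (Fin nm) ℝ)
    (H : Matrix (Fin nm) (Fin np) ℝ) (F : Matrix (Fin nm) (Fin nm) ℝ)
    (hGH : IsUnit (1 - G * H).det) (hHG : IsUnit (1 - H * G).det)
    (m : ℕ) (hm : 1 ≤ m) :
    (1 : Matrix (Fin m) (Fin m) ℝ) ⊗ₖ fromBlocks 0 G H 0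
      + ((1 : Matrix (Fin m) (Fin m) ℝ) ⊗ₖ fromBlocks 0 0 0 F + Zc m ⊗ₖ fromBlocks E 0 0 0)
        * ((1 : Matrix (Fin m) (Fin m) ℝ) ⊗ₖ (1 - fromBlocks 0 G H 0))⁻¹
        * ((Zc m)⁻¹ ⊗ₖ fromBlocks 0 0 0 F + (1 : Matrix (Fin m) (Fin m) ℝ) ⊗ₖ fromBlocks E 0 0 0)
      = (Zc m)⁻¹ ⊗ₖ fromBlocks 0 0 0 (F * (1 - H * G)⁻¹ * F)
        + (1 : Matrix (Fin m) (Fin m) ℝ) ⊗ₖ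
            fromBlocks 0 (G + E * (1 - G * H)⁻¹ * (G * F)) (H + F * (1 - H * G)⁻¹ * (H * E)) 0
        + Zc m ⊗ₖ fromBlocks (E * (1 - G * H)⁻¹ * E) 0 0 0 :=
  stmt7_general np nm E G H F hGH hHG m
end

section
/- Let Ψ ∈ ℝ^{n₊×n₋}, Ψ̂ ∈ ℝ^{n₋×n₊}, F_∞ ∈ ℝ^{n₋×n₋}, and let ξ = (ξ₊, ξ₋) ∈ ℝ^{1×n} be a row vector with ξT = 0. Define W = T₋₋ + T₋₊Ψ, Ŵ = T₊₊ + T₊₋Ψ̂, K = C₊⁻¹T₊₊ + Ψ|C₋|⁻¹T₋₊, and K̂ = |C₋|⁻¹T₋₋ + Ψ̂C₊⁻¹T₊₋. Then: (i) if Ψ𝟏 = 𝟏 then W𝟏 = 0; (ii) if Ψ̂𝟏 + F_∞𝟏 = 𝟏 then −Ŵ𝟏 = T₊₋F_∞𝟏; (iii) if ξ₋|C₋| − ξ₊C₊Ψ = ξ₋|C₋|F_∞ then −ξ₊C₊K = ξ₋|C₋|F_∞|C₋|⁻¹T₋₊; (iv) if ξ₊C₊ = ξ₋|C₋|Ψ̂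 then ξ₋|C₋|K̂ = 0. (These equalities provide triplet representations for the M-matrices −W, −Ŵ, −K and −K̂.) -/
open Matrix

/-- With W = T₋₋ + T₋₊Ψ, Ŵ = T₊₊ + T₊₋Ψ̂, K = C₊⁻¹T₊₊ + Ψ|C₋|⁻¹T₋₊,
K̂ = |C₋|⁻¹T₋₋ + Ψ̂C₊⁻¹T₊₋, and ξ a row vector with ξT = 0:
(i) Ψ𝟏 = 𝟏 → W𝟏 = 0; (ii) Ψ̂𝟏 + F_∞𝟏 = 𝟏 → −Ŵ𝟏 = T₊₋F_∞𝟏;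
(iii) ξ₋|C₋| − ξ₊C₊Ψ = ξ₋|C₋|F_∞ → −ξ₊C₊K = ξ₋|C₋|F_∞|C₋|⁻¹T₋₊;
(iv) ξ₊C₊ = ξ₋|C₋|Ψ̂ → ξ₋|C₋|K̂ = 0. -/
theorem stmt9 (np nm : ℕ) (hnp : 1 ≤ np) (hnm : 1 ≤ nm)
    (T : Matrix (Fin np ⊕ Fin nm) (Fin np ⊕ Fin nm) ℝ)
    (hTod : ∀ i j, i ≠ j → 0 ≤ T i j)
    (hT1 : T *ᵥ 1 = 0)
    (c : Fin np ⊕ Fin nm → ℝ)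
    (hcp : ∀ i : Fin np, 0 < c (Sum.inl i))
    (hcm : ∀ i : Fin nm, c (Sum.inr i) < 0)
    (Ψ : Matrix (Fin np) (Fin nm) ℝ) (Ψhat : Matrix (Fin nm) (Fin np) ℝ)
    (Finf : Matrix (Fin nm) (Fin nm) ℝ)
    (ξ : Fin np ⊕ Fin nm → ℝ) (hξT : ξ ᵥ* T = 0)
    -- abbreviations
    (Cp : Matrix (Fin np) (Fin np) ℝ) (hCp : Cp = diagonal (fun i => c (Sum.inl i)))
    (Cm : Matrix (Fin nm) (Fin nm) ℝ) (hCm : Cm = diagonal (fun i => -c (Sum.inr i)))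
    (W : Matrix (Fin nm) (Fin nm) ℝ) (hW : W = T.toBlocks₂₂ + T.toBlocks₂₁ * Ψ)
    (What : Matrix (Fin np) (Fin np) ℝ) (hWhat : What = T.toBlocks₁₁ + T.toBlocks₁₂ * Ψhat)
    (K : Matrix (Fin np) (Fin np) ℝ) (hK : K = Cp⁻¹ * T.toBlocks₁₁ + Ψ * Cm⁻¹ * T.toBlocks₂₁)
    (Khat : Matrix (Fin nm) (Fin nm) ℝ)
    (hKhat : Khat = Cm⁻¹ * T.toBlocks₂₂ + Ψhat * Cp⁻¹ * T.toBlocks₁₂)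
    (ξp : Fin np → ℝ) (hξp : ξp = fun i => ξ (Sum.inl i))
    (ξm : Fin nm → ℝ) (hξm : ξm = fun i => ξ (Sum.inr i)) :
    (Ψ *ᵥ 1 = 1 → W *ᵥ 1 = 0) ∧
    (Ψhat *ᵥ 1 + Finf *ᵥ 1 = 1 → (-What) *ᵥ 1 = T.toBlocks₁₂ *ᵥ (Finf *ᵥ 1)) ∧
    (ξm ᵥ* Cm - ξp ᵥ* (Cp * Ψ) = ξm ᵥ* (Cm * Finf) →
      -(ξp ᵥ* (Cp * K)) = ξm ᵥ* (Cm * Finf * Cm⁻¹ * T.toBlocks₂₁)) ∧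
    (ξp ᵥ* Cp = ξm ᵥ* (Cm * Ψhat) → ξm ᵥ* (Cm * Khat) = 0) := by

  have h11 : T.toBlocks₁₁ *ᵥ 1 + T.toBlocks₁₂ *ᵥ 1 = 0 := by
    funext i
    have := congrFun hT1 (Sum.inl i)
    simpa [Matrix.mulVec, dotProduct, Fintype.sum_sum_type,
      Matrix.toBlocks₁₁, Matrix.toBlocks₁₂] using this
  have h21 : T.toBlocks₂₁ *ᵥ 1 + T.toBlocks₂₂ *ᵥ 1 = 0 := by
    funext i
    have := congrFun hT1 (Sum.inr i)
    simpa [Matrix.mulVec, dotProduct, Fintype.sum_sum_type,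
      Matrix.toBlocks₂₁, Matrix.toBlocks₂₂] using this
  have hx1 : ξp ᵥ* T.toBlocks₁₁ + ξm ᵥ* T.toBlocks₂₁ = 0 := by
    funext j
    have := congrFun hξT (Sum.inl j)
    simpa [Matrix.vecMul, dotProduct, Fintype.sum_sum_type,
      Matrix.toBlocks₁₁, Matrix.toBlocks₂₁, hξp, hξm] using this
  have hx2 : ξp ᵥ* T.toBlocks₁₂ + ξm ᵥ* T.toBlocks₂₂ = 0 := by
    funext j
    have := congrFun hξT (Sum.inr j)
    simpa [Matrix.vecMul, dotProduct, Fintype.sum_sum_type,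
      Matrix.toBlocks₁₂, Matrix.toBlocks₂₂, hξp, hξm] using this
  have hCpdet : Cp.det ≠ 0 := by
    rw [hCp, Matrix.det_diagonal]
    exact Finset.prod_ne_zero_iff.mpr fun i _ => ne_of_gt (hcp i)
  have hCmdet : Cm.det ≠ 0 := by
    rw [hCm, Matrix.det_diagonal]
    exact Finset.prod_ne_zero_iff.mpr fun i _ => ne_of_gt (neg_pos.mpr (hcm i))
  have hCpi : Cp * Cp⁻¹ = 1 := Matrix.mul_nonsing_inv Cp (Ne.isUnit hCpdet)
  have hCmi : Cm * Cm⁻¹ = 1 := Matrix.mul_nonsing_inv Cm (Ne.isUnit hCmdet)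
  refine ⟨?_, ?_, ?_, ?_⟩
  · intro h
    rw [hW, Matrix.add_mulVec, ← Matrix.mulVec_mulVec, h, add_comm]
    exact h21
  · intro h
    have hΨ : Ψhat *ᵥ 1 = 1 - Finf *ᵥ 1 := eq_sub_of_add_eq h
    have h11' : T.toBlocks₁₂ *ᵥ 1 = -(T.toBlocks₁₁ *ᵥ 1) := by
      rw [eq_neg_iff_add_eq_zero, add_comm]; exact h11
    rw [hWhat, Matrix.neg_mulVec, Matrix.add_mulVec, ← Matrix.mulVec_mulVec, hΨ,
      Matrix.mulVec_sub, h11']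
    abel
  · intro h
    set A := Cm⁻¹ * T.toBlocks₂₁ with hA
    have key : Cp * K = T.toBlocks₁₁ + (Cp * Ψ) * A := by
      rw [hK, Matrix.mul_add, ← Matrix.mul_assoc, hCpi, Matrix.one_mul,
        Matrix.mul_assoc Ψ, ← Matrix.mul_assoc Cp Ψ]
    have hAeq : (ξm ᵥ* Cm) ᵥ* A = ξm ᵥ* T.toBlocks₂₁ := by
      rw [Matrix.vecMul_vecMul, ← Matrix.mul_assoc, hCmi, Matrix.one_mul]
    have hx1' : -(ξp ᵥ* T.toBlocks₁₁) = (ξm ᵥ* Cm) ᵥ* A := by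
      rw [hAeq]; exact neg_eq_of_add_eq_zero_left (by rw [add_comm]; exact hx1)
    calc -(ξp ᵥ* (Cp * K))
        = -(ξp ᵥ* T.toBlocks₁₁ + (ξp ᵥ* (Cp * Ψ)) ᵥ* A) := by
          rw [key, Matrix.vecMul_add, ← Matrix.vecMul_vecMul]
      _ = (ξm ᵥ* Cm) ᵥ* A - (ξp ᵥ* (Cp * Ψ)) ᵥ* A := by rw [neg_add, ← hx1']; ring_nf
      _ = (ξm ᵥ* Cm - ξp ᵥ* (Cp * Ψ)) ᵥ* A := (Matrix.sub_vecMul _ _ _).symm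
      _ = (ξm ᵥ* (Cm * Finf)) ᵥ* A := by rw [h]
      _ = ξm ᵥ* (Cm * Finf * Cm⁻¹ * T.toBlocks₂₁) := by
          rw [Matrix.vecMul_vecMul, hA, ← Matrix.mul_assoc]
  · intro h
    have key : Cm * Khat = T.toBlocks₂₂ + (Cm * Ψhat) * (Cp⁻¹ * T.toBlocks₁₂) := by
      rw [hKhat, Matrix.mul_add, ← Matrix.mul_assoc, hCmi, Matrix.one_mul,
        Matrix.mul_assoc Ψhat, ← Matrix.mul_assoc Cm Ψhat]
    rw [key, Matrix.vecMul_add, ← Matrix.vecMul_vecMul, ← h, Matrix.vecMul_vecMul,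
      ← Matrix.mul_assoc, hCpi, Matrix.one_mul, add_comm]
    exact hx2
end

section
/- Let n ≥ 1 be an integer and ε ≥ 0, K̂₀ ≥ 0, 0 ≤ δ < 1 reals. Let Ψ and G₀ ≤ G₁ ≤ ⋯ ≤ G_k be nonnegative real matrices of the same size with G_h ≤ Ψ for all 0 ≤ h ≤ k and Ψ − G_h ≤ K̂₀ δ^{2ʰ} Ψ for all 0 ≤ h ≤ k−1, and set J_h = G_h − G_{h−1} for 1 ≤ h ≤ k. Let G̃₀ and J̃₁, …, J̃_k be real matrices of the same size with |G̃₀ − G₀| ≤ εG₀ and |J̃_h − J_h| ≤ n·2ʰ·ε·J_h for each 1 ≤ h ≤ k, and put G̃_k = G̃₀ + Σ_{h=1}^{k} J̃_h. Then |G̃_k − G_k| ≤ (1 + 4K̂₀n/(1−δ))·ε·Ψ entrywise. -/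
/-!
Since the perturbed and exact iterates are both obtained by adding increments to the starting
matrix, the error of `G̃ₖ` is at most the error of `G̃₀` plus the sum of the errors of the
increments. Each increment is small because the iterates converge quadratically:
`J_h ≤ Ψ - G_{h-1} ≤ K̂₀ δ^{2^{h-1}} Ψ`. This beats the growth `2ʰ` of the increment error
bounds, since by Cauchy condensation `∑ₕ 2ʰ δ^{2^{h-1}} ≤ 4 ∑ₘ δᵐ ≤ 4 / (1 - δ)`.
-/

open Finset

theorem Finset.sum_Icc_one_eq_sum_range {M : Type*} [AddCommMonoid M] (f : ℕ → M) (k : ℕ) :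
    ∑ h ∈ Icc 1 k, f h = ∑ h ∈ range k, f (h + 1) := by
  rw [range_eq_Ico, sum_Ico_add' f 0 k 1, zero_add, Ico_add_one_right_eq_Icc]

theorem Finset.sum_Icc_one_sub_pred {M : Type*} [AddCommGroup M] (f : ℕ → M) (k : ℕ) :
    ∑ h ∈ Icc 1 k, (f h - f (h - 1)) = f k - f 0 := by
  rw [sum_Icc_one_eq_sum_range]
  simp only [Nat.add_sub_cancel]
  exact sum_range_sub f k

theorem abs_add_sum_sub_add_sum_le {ι α : Type*} [AddCommGroup α] [LinearOrder α]
    [IsOrderedAddMonoid α] (s : Finset ι) (a b : α) (f g : ι → α) :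
    |(a + ∑ i ∈ s, f i) - (b + ∑ i ∈ s, g i)| ≤ |a - b| + ∑ i ∈ s, |f i - g i| := by
  rw [add_sub_add_comm, ← sum_sub_distrib]
  exact (abs_add_le _ _).trans (add_le_add_right (abs_sum_le_sum_abs _ _) _)

theorem sum_range_two_pow_mul_pow_two_pow_le {x : ℝ} (hx0 : 0 ≤ x) (hx1 : x < 1) (k : ℕ) :
    ∑ h ∈ range k, (2 : ℝ) ^ h * x ^ 2 ^ h ≤ 2 / (1 - x) := by
  have hanti : ∀ ⦃m n : ℕ⦄, 1 < m → m ≤ n → x ^ n ≤ x ^ m :=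
    fun _ _ _ hmn => pow_le_pow_of_le_one hx0 hx1.le hmn
  have hgeom := geom_sum_Ico_le_of_lt_one (m := 1) (n := 2 ^ k + 1) hx0 hx1
  rw [sum_eq_sum_Ico_succ_bot (Nat.lt_add_of_pos_left k.two_pow_pos), pow_one] at hgeom
  calc ∑ h ∈ range k, (2 : ℝ) ^ h * x ^ 2 ^ h
      ≤ ∑ h ∈ range (k + 1), 2 ^ h • x ^ 2 ^ h := by
        simp only [nsmul_eq_mul, Nat.cast_pow, Nat.cast_ofNat]
        exact sum_le_sum_of_subset_of_nonneg (range_subset_range.2 k.le_succ)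
          fun _ _ _ => by positivity
    _ ≤ x ^ 1 + 2 • ∑ m ∈ Ico 2 (2 ^ k + 1), x ^ m := sum_condensed_le hanti k
    _ ≤ 2 * (x + ∑ m ∈ Ico 2 (2 ^ k + 1), x ^ m) := by
        rw [pow_one, two_nsmul]
        linarith [sum_nonneg fun m (_ : m ∈ Ico 2 (2 ^ k + 1)) => pow_nonneg hx0 m]
    _ ≤ 2 * (x / (1 - x)) := by gcongr
    _ ≤ 2 / (1 - x) := by
        rw [mul_div_assoc']
        gcongr
        linarith

theorem sum_Icc_two_pow_mul_pow_two_pow_pred_le {x : ℝ} (hx0 : 0 ≤ x) (hx1 : x < 1) (k : ℕ) :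
    ∑ h ∈ Icc 1 k, (2 : ℝ) ^ h * x ^ 2 ^ (h - 1) ≤ 4 / (1 - x) := by
  have hrange := sum_range_two_pow_mul_pow_two_pow_le hx0 hx1 k
  rw [sum_Icc_one_eq_sum_range]
  simp only [Nat.add_sub_cancel, pow_succ, mul_comm _ (2 : ℝ), mul_assoc, ← mul_sum]
  rw [show (4 : ℝ) / (1 - x) = 2 * (2 / (1 - x)) by ring]
  gcongr

theorem stmt13_general (r s : ℕ) (n : ℕ) (k : ℕ)
    (ε K0hat δ : ℝ) (hε : 0 ≤ ε) (hK0 : 0 ≤ K0hat) (hδ0 : 0 ≤ δ) (hδ1 : δ < 1)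
    (Ψ : Matrix (Fin r) (Fin s) ℝ)
    (G : ℕ → Matrix (Fin r) (Fin s) ℝ)
    (hΨ0 : ∀ i j, 0 ≤ Ψ i j)
    (hGΨ : ∀ h ≤ k, ∀ i j, G h i j ≤ Ψ i j)
    (hrate : ∀ h ≤ k - 1, ∀ i j, Ψ i j - G h i j ≤ K0hat * δ ^ (2 ^ h) * Ψ i j)
    (J : ℕ → Matrix (Fin r) (Fin s) ℝ)
    (hJ : ∀ h, 1 ≤ h → h ≤ k → J h = G h - G (h - 1))
    (G0til : Matrix (Fin r) (Fin s) ℝ)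
    (Jtil : ℕ → Matrix (Fin r) (Fin s) ℝ)
    (hG0til : ∀ i j, |G0til i j - G 0 i j| ≤ ε * G 0 i j)
    (hJtil : ∀ h, 1 ≤ h → h ≤ k → ∀ i j,
      |Jtil h i j - J h i j| ≤ (n : ℝ) * 2 ^ h * ε * J h i j)
    (Gktil : Matrix (Fin r) (Fin s) ℝ)
    (hGktil : Gktil = G0til + ∑ h ∈ Finset.Icc 1 k, Jtil h) :
    ∀ i j, |Gktil i j - G k i j| ≤ (1 + 4 * K0hat * n / (1 - δ)) * ε * Ψ i j := by
  intro i j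
  have hGk : G k = G 0 + ∑ h ∈ Icc 1 k, J h := by
    rw [sum_congr rfl fun h hh => hJ h (mem_Icc.1 hh).1 (mem_Icc.1 hh).2, sum_Icc_one_sub_pred]
    abel
  have hJtil_le : ∀ h ∈ Icc 1 k,
      |Jtil h i j - J h i j| ≤ 2 ^ h * δ ^ 2 ^ (h - 1) * (n * ε * K0hat * Ψ i j) := by
    intro h hh
    obtain ⟨h1, hk⟩ := mem_Icc.1 hh
    have hJ_le : J h i j ≤ K0hat * δ ^ 2 ^ (h - 1) * Ψ i j := by
      rw [hJ h h1 hk, Matrix.sub_apply]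
      linarith [hGΨ h hk i j, hrate (h - 1) (by omega) i j]
    calc |Jtil h i j - J h i j| ≤ n * 2 ^ h * ε * J h i j := hJtil h h1 hk i j
      _ ≤ n * 2 ^ h * ε * (K0hat * δ ^ 2 ^ (h - 1) * Ψ i j) := by gcongr
      _ = 2 ^ h * δ ^ 2 ^ (h - 1) * (n * ε * K0hat * Ψ i j) := by ring
  have hΨij := hΨ0 i j
  calc |Gktil i j - G k i j|
      = |(G0til i j + ∑ h ∈ Icc 1 k, Jtil h i j) - (G 0 i j + ∑ h ∈ Icc 1 k, J h i j)| := by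
        rw [hGktil, hGk]
        simp only [Matrix.add_apply, Matrix.sum_apply]
    _ ≤ |G0til i j - G 0 i j| + ∑ h ∈ Icc 1 k, |Jtil h i j - J h i j| :=
        abs_add_sum_sub_add_sum_le _ _ _ _ _
    _ ≤ ε * Ψ i j + ∑ h ∈ Icc 1 k, 2 ^ h * δ ^ 2 ^ (h - 1) * (n * ε * K0hat * Ψ i j) :=
        add_le_add ((hG0til i j).trans (by gcongr; exact hGΨ 0 k.zero_le i j))
          (sum_le_sum hJtil_le)
    _ ≤ ε * Ψ i j + 4 / (1 - δ) * (n * ε * K0hat * Ψ i j) := by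
        rw [← sum_mul]
        gcongr
        exact sum_Icc_two_pow_mul_pow_two_pow_pred_le hδ0 hδ1 k
    _ = (1 + 4 * K0hat * n / (1 - δ)) * ε * Ψ i j := by
        field_simp

/-- Given nonnegative matrices G₀ ≤ G₁ ≤ ⋯ ≤ G_k ≤ Ψ with
Ψ − G_h ≤ K̂₀δ^{2ʰ}Ψ for h ≤ k−1, increments J_h = G_h − G_{h−1}, and approximations
with |G̃₀ − G₀| ≤ εG₀ and |J̃_h − J_h| ≤ n·2ʰ·ε·J_h, the sum G̃_k = G̃₀ + Σ J̃_h
satisfies |G̃_k − G_k| ≤ (1 + 4K̂₀n/(1−δ))·ε·Ψ entrywise. -/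
theorem stmt13 (r s : ℕ) (n : ℕ) (hn : 1 ≤ n) (k : ℕ)
    (ε K0hat δ : ℝ) (hε : 0 ≤ ε) (hK0 : 0 ≤ K0hat) (hδ0 : 0 ≤ δ) (hδ1 : δ < 1)
    (Ψ : Matrix (Fin r) (Fin s) ℝ)
    (G : ℕ → Matrix (Fin r) (Fin s) ℝ)
    (hG0 : ∀ h ≤ k, ∀ i j, 0 ≤ G h i j)
    (hΨ0 : ∀ i j, 0 ≤ Ψ i j)
    (hmono : ∀ h, h + 1 ≤ k → ∀ i j, G h i j ≤ G (h + 1) i j)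
    (hGΨ : ∀ h ≤ k, ∀ i j, G h i j ≤ Ψ i j)
    (hrate : ∀ h ≤ k - 1, ∀ i j, Ψ i j - G h i j ≤ K0hat * δ ^ (2 ^ h) * Ψ i j)
    (J : ℕ → Matrix (Fin r) (Fin s) ℝ)
    (hJ : ∀ h, 1 ≤ h → h ≤ k → J h = G h - G (h - 1))
    (G0til : Matrix (Fin r) (Fin s) ℝ)
    (Jtil : ℕ → Matrix (Fin r) (Fin s) ℝ)
    (hG0til : ∀ i j, |G0til i j - G 0 i j| ≤ ε * G 0 i j)
    (hJtil : ∀ h, 1 ≤ h → h ≤ k → ∀ i j,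
      |Jtil h i j - J h i j| ≤ (n : ℝ) * 2 ^ h * ε * J h i j)
    (Gktil : Matrix (Fin r) (Fin s) ℝ)
    (hGktil : Gktil = G0til + ∑ h ∈ Finset.Icc 1 k, Jtil h) :
    ∀ i j, |Gktil i j - G k i j| ≤ (1 + 4 * K0hat * n / (1 - δ)) * ε * Ψ i j :=
  stmt13_general r s n k ε K0hat δ hε hK0 hδ0 hδ1 Ψ G hΨ0 hGΨ hrate J hJ G0til Jtil hG0til hJtil
    Gktil hGktil
end

section
/- For every real δ with 0 ≤ δ < 1 and every integer k ≥ 1, one has Σ_{h=1}^{k} 2ʰ · δ^{2^{h−1}} ≤ 4δ/(1−δ). -/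
lemma stmt14_aux (δ : ℝ) (hδ0 : 0 ≤ δ) (hδ1 : δ < 1) :
    ∀ k : ℕ, 1 ≤ k →
    ∑ h ∈ Finset.Icc 1 k, (2 : ℝ) ^ h * δ ^ (2 ^ (h - 1)) ≤
      4 * ∑ j ∈ Finset.Icc 1 (2 ^ (k - 1)), δ ^ j := by
  intro k hk
  induction k, hk using Nat.le_induction with
  | base => simp; nlinarith
  | succ k hk ih =>
    rw [Finset.sum_Icc_succ_top (by omega)]
    have hsplit : ∑ j ∈ Finset.Icc 1 (2 ^ ((k+1) - 1)), δ ^ j =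
        ∑ j ∈ Finset.Icc 1 (2 ^ (k - 1)), δ ^ j +
        ∑ j ∈ Finset.Ioc (2 ^ (k - 1)) (2 ^ k), δ ^ j := by
      rw [show (k+1) - 1 = k from rfl,
        show Finset.Icc 1 (2 ^ (k-1)) = Finset.Ioc 0 (2 ^ (k-1)) from Finset.Icc_add_one_left_eq_Ioc 0 _,
        show Finset.Icc 1 (2 ^ k) = Finset.Ioc 0 (2 ^ k) from Finset.Icc_add_one_left_eq_Ioc 0 _,
        Finset.sum_Ioc_consecutive]
      · exact Nat.zero_le _
      · exact Nat.pow_le_pow_right (by norm_num) (by omega)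
    rw [hsplit, mul_add]
    have hblock : (2 : ℝ) ^ (k + 1) * δ ^ (2 ^ ((k+1) - 1)) ≤
        4 * ∑ j ∈ Finset.Ioc (2 ^ (k - 1)) (2 ^ k), δ ^ j := by
      have hcard : (Finset.Ioc (2 ^ (k - 1)) (2 ^ k)).card = 2 ^ (k - 1) := by
        rw [Nat.card_Ioc]
        have : 2 ^ (k - 1) * 2 = 2 ^ k := by
          rw [← pow_succ]; congr 1; omega
        omega
      have hle : ∀ j ∈ Finset.Ioc (2 ^ (k - 1)) (2 ^ k), δ ^ (2 ^ k) ≤ δ ^ j := by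
        intro j hj
        exact pow_le_pow_of_le_one hδ0 hδ1.le (Finset.mem_Ioc.mp hj).2
      have hsum := Finset.card_nsmul_le_sum _ _ _ hle
      rw [hcard, nsmul_eq_mul] at hsum
      have h2 : (2 : ℝ) ^ (k + 1) = 4 * 2 ^ (k - 1) := by
        rw [show (4 : ℝ) = 2 ^ 2 by norm_num, ← pow_add]
        congr 1; omega
      rw [show (k+1) - 1 = k from rfl, h2]
      calc 4 * (2:ℝ) ^ (k-1) * δ ^ 2 ^ k
          = 4 * ((2 ^ (k-1) : ℕ) * δ ^ 2 ^ k) := by push_cast; ring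
        _ ≤ 4 * ∑ j ∈ Finset.Ioc (2 ^ (k - 1)) (2 ^ k), δ ^ j := by
            nlinarith [hsum]
    linarith
/-- For 0 ≤ δ < 1 and k ≥ 1, Σ_{h=1}^{k} 2ʰ·δ^{2^{h−1}} ≤ 4δ/(1−δ). -/
theorem stmt14 (δ : ℝ) (hδ0 : 0 ≤ δ) (hδ1 : δ < 1) (k : ℕ) (hk : 1 ≤ k) :
    ∑ h ∈ Finset.Icc 1 k, (2 : ℝ) ^ h * δ ^ (2 ^ (h - 1)) ≤ 4 * δ / (1 - δ) := by
  refine (stmt14_aux δ hδ0 hδ1 k hk).trans ?_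
  set N := 2 ^ (k - 1)
  have h1 : ∑ j ∈ Finset.Icc 1 N, δ ^ j = δ * ∑ j ∈ Finset.range N, δ ^ j := by
    rw [Finset.mul_sum, ← Finset.Ico_add_one_right_eq_Icc, Finset.sum_Ico_eq_sum_range]
    simp [pow_add]
  have h3' : (0:ℝ) < 1 - δ := by linarith
  have h2 : ∑ j ∈ Finset.range N, δ ^ j ≤ 1 / (1 - δ) := by
    rw [geom_sum_eq hδ1.ne N]
    have heq : (δ ^ N - 1)/(δ - 1) = (1 - δ ^ N)/(1 - δ) := by
      rw [div_eq_div_iff (by linarith) (by linarith)]; ring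
    rw [heq]
    have hN : 0 ≤ δ ^ N := pow_nonneg hδ0 N
    gcongr
    linarith
  have h3 : (0:ℝ) < 1 - δ := by linarith
  rw [h1]
  rw [div_eq_mul_inv, mul_assoc]
  have : δ * ∑ j ∈ Finset.range N, δ ^ j ≤ δ * (1 - δ)⁻¹ := by
    have := mul_le_mul_of_nonneg_left h2 hδ0
    rwa [one_div] at this
  linarith
end

section
/- Let P be an m×m stochastic matrix partitioned as P = [[P₁₁,P₁₂],[P₂₁,P₂₂]] with P₁₁ square, and suppose I − P₁₁ is invertible. Then: (i) the censored matrix P' = P₂₂ + P₂₁(I−P₁₁)⁻¹P₁₂ is stochastic; (ii) for every row vector ξ = (ξ₁, ξ₂) ≥ 0 partitioned conformally with ξP = ξ, one has ξ₂P' = ξ₂. -/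
open Matrix

open Filter Set

section NormPart

attribute [local instance] Matrix.linftyOpNormedAddCommGroup Matrix.linftyOpNormedRing
  Matrix.linftyOpNormedSpace

lemma stmt19_ring_inverse_nonneg {n : ℕ} (A : Matrix (Fin n) (Fin n) ℝ)
    (hA : ∀ i j, 0 ≤ A i j) (hrow : ∀ i, ∑ j, A i j ≤ 1)
    {t : ℝ} (ht0 : 0 ≤ t) (ht1 : t < 1) :
    (∀ i j, 0 ≤ Ring.inverse (1 - t • A) i j) ∧ IsUnit (1 - t • A).det := by
  haveI : CompleteSpace (Matrix (Fin n) (Fin n) ℝ) := FiniteDimensional.complete ℝ _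
  have hAnorm : ‖A‖ ≤ 1 := by
    rw [Matrix.linfty_opNorm_def, show (1:ℝ) = ((1:NNReal):ℝ) by norm_num, NNReal.coe_le_coe]
    refine Finset.sup_le fun i _ => ?_
    rw [← NNReal.coe_le_coe, NNReal.coe_sum, NNReal.coe_one]
    calc ∑ j, (‖A i j‖₊ : ℝ) = ∑ j, A i j := by
          refine Finset.sum_congr rfl fun j _ => ?_
          rw [coe_nnnorm, Real.norm_of_nonneg (hA i j)]
      _ ≤ 1 := hrow i
  have hlt : ‖t • A‖ < 1 := by
    rw [norm_smul, Real.norm_of_nonneg ht0]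
    calc t * ‖A‖ ≤ t * 1 := by
          exact mul_le_mul_of_nonneg_left hAnorm ht0
      _ < 1 := by linarith
  have hpow : ∀ k : ℕ, ∀ i j, 0 ≤ ((t • A) ^ k) i j := by
    intro k
    induction k with
    | zero => intro i j; simp only [pow_zero, Matrix.one_apply]; positivity
    | succ k ih =>
      intro i j
      rw [pow_succ, Matrix.mul_apply]
      refine Finset.sum_nonneg fun l _ => mul_nonneg (ih i l) ?_
      simp only [Matrix.smul_apply, smul_eq_mul]
      exact mul_nonneg ht0 (hA l j)
  have hs := hasSum_geom_series_inverse (t • A) hlt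
  constructor
  · intro i j
    let φ : Matrix (Fin n) (Fin n) ℝ →ₗ[ℝ] ℝ :=
      { toFun := fun M => M i j
        map_add' := fun M N => rfl
        map_smul' := fun c M => rfl }
    have hφ : Continuous φ := φ.continuous_of_finiteDimensional
    have hs' := hs.map φ.toAddMonoidHom hφ
    exact hasSum_le (fun k => hpow k i j) hasSum_zero hs'
  · have : IsUnit (1 - t • A) := isUnit_one_sub_of_norm_lt_one hlt
    exact (Matrix.isUnit_iff_isUnit_det _).mp this

end NormPart

lemma stmt19_inv_nonneg {n : ℕ} (A : Matrix (Fin n) (Fin n) ℝ)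
    (hA : ∀ i j, 0 ≤ A i j) (hrow : ∀ i, ∑ j, A i j ≤ 1)
    (hdet : IsUnit (1 - A).det) : ∀ i j, 0 ≤ (1 - A)⁻¹ i j := by
  intro i j
  set f : ℝ → ℝ := fun t => ((1 - t • A).det)⁻¹ * (1 - t • A).adjugate i j with hf
  have hMcont : Continuous fun t : ℝ => (1 : Matrix (Fin n) (Fin n) ℝ) - t • A := by
    refine continuous_matrix fun k l => ?_
    simp only [Matrix.sub_apply, Matrix.smul_apply, smul_eq_mul]
    fun_prop
  have hdet1 : ((1 : Matrix (Fin n) (Fin n) ℝ) - (1:ℝ) • A).det ≠ 0 := by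
    rw [one_smul]
    exact hdet.ne_zero
  have hfc : ContinuousAt f 1 := by
    apply ContinuousAt.mul
    · exact (hMcont.matrix_det.continuousAt).inv₀ hdet1
    · exact ((continuous_apply j).comp ((continuous_apply i).comp
        hMcont.matrix_adjugate)).continuousAt
  have hlim : Tendsto f (nhdsWithin 1 (Iio 1)) (nhds (f 1)) :=
    hfc.continuousWithinAt
  have hev : ∀ᶠ t in nhdsWithin (1:ℝ) (Iio 1), 0 ≤ f t := by
    filter_upwards [Ioo_mem_nhdsLT (show (0:ℝ) < 1 by norm_num)] with t ht
    have key := stmt19_ring_inverse_nonneg A hA hrow ht.1.le ht.2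
    have h1 : Ring.inverse (1 - t • A) = (1 - t • A)⁻¹ :=
      (Matrix.nonsing_inv_eq_ringInverse _).symm
    have h2 : (1 - t • A)⁻¹ = Ring.inverse ((1 - t • A).det) • (1 - t • A).adjugate :=
      Matrix.inv_def _
    have := key.1 i j
    rw [h1, h2] at this
    simpa only [hf, Matrix.smul_apply, smul_eq_mul, Ring.inverse_eq_inv'] using this
  have h0 : 0 ≤ f 1 := ge_of_tendsto hlim hev
  have : f 1 = (1 - A)⁻¹ i j := by
    rw [hf]
    simp only [one_smul]
    rw [Matrix.inv_def]
    simp [Ring.inverse_eq_inv']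
  linarith [this ▸ h0]

/-- For a stochastic matrix P = [[P₁₁,P₁₂],[P₂₁,P₂₂]] with I − P₁₁
invertible: (i) the censored matrix P' = P₂₂ + P₂₁(I−P₁₁)⁻¹P₁₂ is stochastic;
(ii) every nonnegative row vector ξ = (ξ₁,ξ₂) with ξP = ξ satisfies ξ₂P' = ξ₂. -/
theorem stmt19 (m₁ m₂ : ℕ)
    (P11 : Matrix (Fin m₁) (Fin m₁) ℝ) (P12 : Matrix (Fin m₁) (Fin m₂) ℝ)
    (P21 : Matrix (Fin m₂) (Fin m₁) ℝ) (P22 : Matrix (Fin m₂) (Fin m₂) ℝ)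
    (hP0 : ∀ i j, 0 ≤ fromBlocks P11 P12 P21 P22 i j)
    (hP1 : ∀ i, ∑ j, fromBlocks P11 P12 P21 P22 i j = 1)
    (hinv : IsUnit (1 - P11).det) :
    (∀ i j, 0 ≤ (P22 + P21 * (1 - P11)⁻¹ * P12) i j) ∧
    (∀ i, ∑ j, (P22 + P21 * (1 - P11)⁻¹ * P12) i j = 1) ∧
    (∀ ξ : Fin m₁ ⊕ Fin m₂ → ℝ, (∀ i, 0 ≤ ξ i) →
      ξ ᵥ* fromBlocks P11 P12 P21 P22 = ξ →
      (fun j => ξ (Sum.inr j)) ᵥ* (P22 + P21 * (1 - P11)⁻¹ * P12)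
        = fun j => ξ (Sum.inr j)) := by
  have h11 : ∀ i j, 0 ≤ P11 i j := fun i j => hP0 (Sum.inl i) (Sum.inl j)
  have h12 : ∀ i j, 0 ≤ P12 i j := fun i j => hP0 (Sum.inl i) (Sum.inr j)
  have h21 : ∀ i j, 0 ≤ P21 i j := fun i j => hP0 (Sum.inr i) (Sum.inl j)
  have h22 : ∀ i j, 0 ≤ P22 i j := fun i j => hP0 (Sum.inr i) (Sum.inr j)
  have hrow1 : ∀ i, ∑ j, P11 i j + ∑ j, P12 i j = 1 := by
    intro i
    have := hP1 (Sum.inl i)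
    rwa [Fintype.sum_sum_type] at this
  have hrow2 : ∀ i, ∑ j, P21 i j + ∑ j, P22 i j = 1 := by
    intro i
    have := hP1 (Sum.inr i)
    rwa [Fintype.sum_sum_type] at this
  have hsub : ∀ i, ∑ j, P11 i j ≤ 1 := by
    intro i
    have h := hrow1 i
    have : 0 ≤ ∑ j, P12 i j := Finset.sum_nonneg fun j _ => h12 i j
    linarith
  set B := (1 - P11)⁻¹ with hB
  have hBnn : ∀ i j, 0 ≤ B i j := stmt19_inv_nonneg P11 h11 hsub hinv
  have hBl : B * (1 - P11) = 1 := Matrix.nonsing_inv_mul _ hinv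
  have hBr : (1 - P11) * B = 1 := Matrix.mul_nonsing_inv _ hinv
  refine ⟨?_, ?_, ?_⟩
  · intro i j
    simp only [Matrix.add_apply, Matrix.mul_apply]
    refine add_nonneg (h22 i j) (Finset.sum_nonneg fun l _ => ?_)
    refine mul_nonneg (Finset.sum_nonneg fun k _ => ?_) (h12 l j)
    exact mul_nonneg (h21 i k) (hBnn k l)
  · -- row sums via mulVec with constant-one vector
    intro i
    have key : (P22 + P21 * B * P12) *ᵥ (fun _ => (1:ℝ)) = fun _ => (1:ℝ) := by
      have h1v : P11 *ᵥ (fun _ => (1:ℝ)) + P12 *ᵥ (fun _ => (1:ℝ)) = fun _ => (1:ℝ) := by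
        funext k
        simpa [Matrix.mulVec, dotProduct] using hrow1 k
      have h2v : P21 *ᵥ (fun _ => (1:ℝ)) + P22 *ᵥ (fun _ => (1:ℝ)) = fun _ => (1:ℝ) := by
        funext k
        simpa [Matrix.mulVec, dotProduct] using hrow2 k
      have hone : (1 - P11) *ᵥ (fun _ => (1:ℝ)) = P12 *ᵥ (fun _ => (1:ℝ)) := by
        have : (1 - P11) *ᵥ (fun _ => (1:ℝ)) =
            (fun _ => (1:ℝ)) - P11 *ᵥ (fun _ => (1:ℝ)) := by
          rw [Matrix.sub_mulVec, Matrix.one_mulVec]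
        rw [this]
        funext k
        have := congrFun h1v k
        simp only [Pi.add_apply] at this
        simp only [Pi.sub_apply]
        linarith
      have hBone : B *ᵥ (P12 *ᵥ (fun _ => (1:ℝ))) = fun _ => (1:ℝ) := by
        rw [← hone, Matrix.mulVec_mulVec, hBl, Matrix.one_mulVec]
      rw [Matrix.add_mulVec]
      have : (P21 * B * P12) *ᵥ (fun _ => (1:ℝ)) = P21 *ᵥ (fun _ => (1:ℝ)) := by
        rw [← Matrix.mulVec_mulVec, ← Matrix.mulVec_mulVec, hBone]
      rw [this]
      funext k
      have := congrFun h2v k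
      simp only [Pi.add_apply] at this
      simp only [Pi.add_apply]
      linarith
    have := congrFun key i
    simpa [Matrix.mulVec, dotProduct] using this
  · intro ξ hξ0 hfix
    set x : Fin m₁ → ℝ := fun i => ξ (Sum.inl i) with hx
    set y : Fin m₂ → ℝ := fun j => ξ (Sum.inr j) with hy
    have hξelim : ξ = Sum.elim x y := by
      funext k; cases k <;> rfl
    rw [hξelim, Matrix.vecMul_fromBlocks] at hfix
    have hfix1 : x ᵥ* P11 + y ᵥ* P21 = x := by
      funext k
      have := congrFun hfix (Sum.inl k)
      simpa using this
    have hfix2 : x ᵥ* P12 + y ᵥ* P22 = y := by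
      funext k
      have := congrFun hfix (Sum.inr k)
      simpa using this
    have hx' : (y ᵥ* P21) ᵥ* B = x := by
      have h1 : x ᵥ* (1 - P11) = y ᵥ* P21 := by
        rw [Matrix.vecMul_sub, Matrix.vecMul_one]
        funext k
        have := congrFun hfix1 k
        simp only [Pi.add_apply] at this
        simp only [Pi.sub_apply]
        linarith
      rw [← h1, Matrix.vecMul_vecMul, hBr, Matrix.vecMul_one]
    calc y ᵥ* (P22 + P21 * B * P12)
        = y ᵥ* P22 + ((y ᵥ* P21) ᵥ* B) ᵥ* P12 := by
          rw [Matrix.vecMul_add, Matrix.vecMul_vecMul, Matrix.vecMul_vecMul]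
          ring_nf
          rw [Matrix.mul_assoc]
      _ = y ᵥ* P22 + x ᵥ* P12 := by rw [hx']
      _ = y := by rw [add_comm]; exact hfix2
end
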